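/- arXiv:1802.01312 — 5 statements merged into one kernel-verified Lean document; each statement's English description precedes it below -/
import Mathlib

section
/- Let h : [0,∞) → ℝ be concave, monotone increasing, with h(0) = 0. Let A₁,…,Aₘ be n×n positive semidefinite matrices, c₁,…,cₘ > 0, and x₁,…,xₘ ∈ [0,1]. Suppose θ > 0 satisfies θ ≤ tr(Aₜ)/cₜ for all t. Then h(θ · Σₜ cₜ xₜ) ≤ Σᵢ h(λᵢ(Σₜ Aₜ xₜ)), where λᵢ(X) denote the eigenvalues of X. -/
/-!
Since `θ cₜ ≤ tr Aₜ`, we get `θ Σₜ cₜxₜ ≤ tr (Σₜ xₜAₜ) = Σᵢ λᵢ`, so monotonicity of `h` gives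
`h (θ Σₜ cₜxₜ) ≤ h (Σᵢ λᵢ)`. The eigenvalues are nonnegative because `Σₜ xₜAₜ` is positive
semidefinite, and a concave function on `[0, ∞)` vanishing at `0` is subadditive there, since
`t h(s) ≤ h(t s)` for `t ∈ [0, 1]`.
-/

open Finset Matrix Set

namespace ConcaveOn

variable {f : ℝ → ℝ}

theorem mul_le_map_mul_of_map_zero (hf : ConcaveOn ℝ (Ici 0) f) (h0 : f 0 = 0) {t x : ℝ}
    (ht₀ : 0 ≤ t) (ht₁ : t ≤ 1) (hx : 0 ≤ x) : t * f x ≤ f (t * x) := by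
  have := hf.2 (mem_Ici.2 le_rfl) (mem_Ici.2 hx) (sub_nonneg.2 ht₁) ht₀ (sub_add_cancel 1 t)
  simpa [h0] using this

theorem map_add_le_of_map_zero (hf : ConcaveOn ℝ (Ici 0) f) (h0 : f 0 = 0) {a b : ℝ}
    (ha : 0 ≤ a) (hb : 0 ≤ b) : f (a + b) ≤ f a + f b := by
  rcases (add_nonneg ha hb).eq_or_lt with hs | hs
  · obtain ⟨rfl, rfl⟩ := (add_eq_zero_iff_of_nonneg ha hb).1 hs.symm
    simp [h0]
  have hsum : a / (a + b) + b / (a + b) = 1 := by rw [← add_div, div_self hs.ne']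
  have hfa := hf.mul_le_map_mul_of_map_zero h0 (div_nonneg ha hs.le)
    (by linarith [div_nonneg hb hs.le]) hs.le
  have hfb := hf.mul_le_map_mul_of_map_zero h0 (div_nonneg hb hs.le)
    (by linarith [div_nonneg ha hs.le]) hs.le
  rw [div_mul_cancel₀ _ hs.ne'] at hfa hfb
  calc f (a + b) = (a / (a + b) + b / (a + b)) * f (a + b) := by rw [hsum, one_mul]
    _ ≤ f a + f b := by linarith

theorem map_sum_le_sum_map_of_map_zero {ι : Type*} (hf : ConcaveOn ℝ (Ici 0) f) (h0 : f 0 = 0)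
    (s : Finset ι) (g : ι → ℝ) (hg : ∀ i ∈ s, 0 ≤ g i) :
    f (∑ i ∈ s, g i) ≤ ∑ i ∈ s, f (g i) :=
  le_sum_of_subadditive_on_pred f (0 ≤ ·) h0.le (fun _ _ => hf.map_add_le_of_map_zero h0)
    (fun _ _ => add_nonneg) g hg

end ConcaveOn

theorem Matrix.IsHermitian.sum_eigenvalues_eq_trace {n : Type*} [Fintype n] [DecidableEq n]
    {A : Matrix n n ℝ} (hA : A.IsHermitian) : ∑ i, hA.eigenvalues i = A.trace := by
  simp [hA.trace_eq_sum_eigenvalues]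

theorem Matrix.mul_sum_le_trace_sum_smul {ι n : Type*} [Fintype ι] [Fintype n]
    {A : ι → Matrix n n ℝ} {c x : ι → ℝ} {θ : ℝ} (hθc : ∀ t, θ * c t ≤ (A t).trace)
    (hx : ∀ t, 0 ≤ x t) : θ * ∑ t, c t * x t ≤ (∑ t, x t • A t).trace := by
  rw [trace_sum, mul_sum]
  refine sum_le_sum fun t _ => ?_
  rw [trace_smul, smul_eq_mul, ← mul_assoc, mul_comm (x t)]
  exact mul_le_mul_of_nonneg_right (hθc t) (hx t)

open Matrix in
/-- Lower bound `h(θ·Σ cₜxₜ) ≤ Σᵢ h(λᵢ(Σₜ Aₜxₜ))` for concave monotone `h` with `h 0 = 0`. -/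
theorem h_theta_le_trace_function {n m : ℕ} (h : ℝ → ℝ)
    (hconc : ConcaveOn ℝ (Set.Ici (0 : ℝ)) h)
    (hmono : MonotoneOn h (Set.Ici (0 : ℝ)))
    (h0 : h 0 = 0)
    (A : Fin m → Matrix (Fin n) (Fin n) ℝ) (hA : ∀ t, (A t).PosSemidef)
    (c : Fin m → ℝ) (hc : ∀ t, 0 < c t)
    (x : Fin m → ℝ) (hx : ∀ t, x t ∈ Set.Icc (0 : ℝ) 1)
    (θ : ℝ) (hθ : 0 < θ) (hθle : ∀ t, θ ≤ (A t).trace / c t)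
    (hU : (∑ t, x t • A t).IsHermitian) :
    h (θ * ∑ t, c t * x t) ≤ ∑ i, h (hU.eigenvalues i) := by
  have hpsd : (∑ t, x t • A t).PosSemidef :=
    posSemidef_sum _ fun t _ => (hA t).smul (hx t).1
  have harg : 0 ≤ θ * ∑ t, c t * x t :=
    mul_nonneg hθ.le (sum_nonneg fun t _ => mul_nonneg (hc t).le (hx t).1)
  have hle : θ * ∑ t, c t * x t ≤ ∑ i, hU.eigenvalues i := by
    rw [hU.sum_eigenvalues_eq_trace]
    exact mul_sum_le_trace_sum_smul (fun t => (le_div_iff₀ (hc t)).1 (hθle t)) fun t => (hx t).1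
  calc h (θ * ∑ t, c t * x t) ≤ h (∑ i, hU.eigenvalues i) := hmono harg (harg.trans hle) hle
    _ ≤ ∑ i, h (hU.eigenvalues i) :=
      hconc.map_sum_le_sum_map_of_map_zero h0 _ _ fun i _ => hpsd.eigenvalues_nonneg i
end

section
/- Let h(u) = log(1+u), θ > 0, γ ≥ 1, b > 0, and define G_S'(u) = −(γ/(b(e−1))) ∫₀ᵘ exp((γ/b)(u−v)) θ/(1+θv) dv. Then for all u ≥ 0, G_S'(u) ≤ (1/(e−1)) · (1 − exp((γ/b)u)) / (θ⁻¹ + b/γ). Consequently, for any Θ > 0, the infimum b' of {u ≥ 0 : G_S'(u) ≤ −Θ} satisfies b' ≤ (b/γ) log((e−1)Θ(θ⁻¹ + b/γ) + 1). -/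
/-!
Write `c = γ / b`. Since `1 / (1 + θv) ≥ exp (-θv)`, the integral in `G_S'(u)` dominates
`θ ∫₀ᵘ exp (cu - (c + θ)v) dv = θ (exp (cu) - exp (-θu)) / (c + θ) ≥ θ (exp (cu) - 1) / (c + θ)`,
and `cθ / (c + θ) = 1 / (θ⁻¹ + c⁻¹)` gives the first bound. At
`u₀ = (b / γ) log ((e - 1) Θ (θ⁻¹ + b / γ) + 1)` that bound equals `-Θ`, so `u₀` lies in the set
whose infimum is `b'`.
-/

open Real intervalIntegral

lemma Real.exp_neg_le_inv_one_add {x : ℝ} (hx : -1 < x) : exp (-x) ≤ (1 + x)⁻¹ := by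
  rw [exp_neg]
  exact inv_anti₀ (by linarith) (by linarith [add_one_le_exp x])

lemma integral_exp_sub_mul (d a b : ℝ) {k : ℝ} (hk : k ≠ 0) :
    ∫ v in a..b, exp (d - k * v) = (exp (d - k * a) - exp (d - k * b)) / k := by
  rw [integral_comp_sub_mul (f := exp) hk, integral_exp, smul_eq_mul, inv_mul_eq_div]

lemma integral_exp_mul_sub_le_integral_div_one_add (c : ℝ) {θ u : ℝ} (hθ : 0 ≤ θ)
    (hu : 0 ≤ u) :
    ∫ v in (0 : ℝ)..u, θ * exp (c * u - (c + θ) * v) ≤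
      ∫ v in (0 : ℝ)..u, exp (c * (u - v)) * (θ / (1 + θ * v)) := by
  have hpos : ∀ v ∈ Set.Icc 0 u, 0 < 1 + θ * v := fun v hv => by nlinarith [hv.1]
  refine integral_mono_on hu ((by fun_prop : Continuous _).intervalIntegrable _ _)
    (ContinuousOn.intervalIntegrable ?_) fun v hv => ?_
  · rw [Set.uIcc_of_le hu]
    exact ContinuousOn.mul (by fun_prop)
      (continuousOn_const.div (by fun_prop) fun v hv => (hpos v hv).ne')
  · calc θ * exp (c * u - (c + θ) * v) = exp (c * (u - v)) * (θ * exp (-(θ * v))) := by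
          rw [mul_left_comm, ← exp_add]; ring_nf
      _ ≤ exp (c * (u - v)) * (θ / (1 + θ * v)) := by
          gcongr
          rw [div_eq_mul_inv]
          gcongr
          exact exp_neg_le_inv_one_add (by linarith [hpos v hv])

lemma div_inv_add_inv_le_mul_integral {c θ u : ℝ} (hc : 0 < c) (hθ : 0 < θ) (hu : 0 ≤ u) :
    (exp (c * u) - 1) / (θ⁻¹ + c⁻¹) ≤
      c * ∫ v in (0 : ℝ)..u, exp (c * (u - v)) * (θ / (1 + θ * v)) := by
  have hcθ : 0 < c + θ := by linarith
  have hlower := integral_exp_mul_sub_le_integral_div_one_add c hθ.le hu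
  rw [integral_const_mul, integral_exp_sub_mul _ _ _ hcθ.ne', mul_zero, sub_zero] at hlower
  have htail : exp (c * u - (c + θ) * u) ≤ 1 := exp_le_one_iff.mpr (by nlinarith)
  calc (exp (c * u) - 1) / (θ⁻¹ + c⁻¹) = c * (θ * ((exp (c * u) - 1) / (c + θ))) := by
        field_simp
    _ ≤ c * (θ * ((exp (c * u) - exp (c * u - (c + θ) * u)) / (c + θ))) := by gcongr
    _ ≤ _ := by gcongr

/-- For D-optimal design (`h(u) = log(1+u)`), an upper bound on `G_S'` and the resulting
bound on the budget `b'` consumed. -/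
theorem GS_D_optimal_bound (γ b θ : ℝ) (hγ : 1 ≤ γ) (hb : 0 < b) (hθ : 0 < θ)
    (GS' : ℝ → ℝ)
    (hGS' : ∀ u : ℝ, GS' u =
      -(γ / (b * (Real.exp 1 - 1))) *
        ∫ v in (0 : ℝ)..u, Real.exp ((γ / b) * (u - v)) * (θ / (1 + θ * v))) :
    (∀ u : ℝ, 0 ≤ u →
        GS' u ≤ (1 / (Real.exp 1 - 1)) * (1 - Real.exp ((γ / b) * u)) / (θ⁻¹ + b / γ)) ∧
    (∀ Θ : ℝ, 0 < Θ →
        sInf {u : ℝ | 0 ≤ u ∧ GS' u ≤ -Θ} ≤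
          (b / γ) * Real.log ((Real.exp 1 - 1) * Θ * (θ⁻¹ + b / γ) + 1)) := by
  have hc : 0 < γ / b := div_pos (by linarith) hb
  have he : 0 < exp 1 - 1 := by linarith [add_one_lt_exp one_ne_zero]
  have hbγ : b / γ = (γ / b)⁻¹ := (inv_div γ b).symm
  have bound : ∀ u, 0 ≤ u →
      GS' u ≤ (1 / (exp 1 - 1)) * (1 - exp ((γ / b) * u)) / (θ⁻¹ + b / γ) := by
    intro u hu
    have key := div_inv_add_inv_le_mul_integral hc hθ hu
    rw [← hbγ] at key
    have hcoef : γ / (b * (exp 1 - 1)) = 1 / (exp 1 - 1) * (γ / b) := by field_simp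
    calc GS' u = -(1 / (exp 1 - 1) * ((γ / b) * ∫ v in (0 : ℝ)..u,
          exp ((γ / b) * (u - v)) * (θ / (1 + θ * v)))) := by rw [hGS', hcoef, neg_mul, mul_assoc]
      _ ≤ -(1 / (exp 1 - 1) * ((exp ((γ / b) * u) - 1) / (θ⁻¹ + b / γ))) := by gcongr
      _ = _ := by ring
  refine ⟨bound, fun Θ hΘ => ?_⟩
  set X := (exp 1 - 1) * Θ * (θ⁻¹ + b / γ) + 1 with hX
  have hX1 : 1 ≤ X := by
    linarith [mul_pos (mul_pos he hΘ) (by positivity : 0 < θ⁻¹ + b / γ)]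
  have hu₀ : 0 ≤ b / γ * log X := mul_nonneg (by positivity) (log_nonneg hX1)
  refine csInf_le ⟨0, fun u hu => hu.1⟩ ⟨hu₀, (bound _ hu₀).trans_eq ?_⟩
  rw [hbγ, ← mul_assoc, mul_inv_cancel₀ hc.ne', one_mul, exp_log (by linarith), hX]
  field_simp
  ring
end

section
/- Let h(u) = 1 − 1/(1+u), θ > 0, γ ≥ 1, b > 0, and define G_S'(u) = −(γ/(b(e−1))) ∫₀ᵘ exp((γ/b)(u−v)) θ/(1+θv)² dv. Then for all u ≥ 0, G_S'(u) ≤ (1/(e−1)) · (1 − exp((γ/b)u)) / (θ⁻¹ + 2b/γ). -/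
/-! Since `1 + x ≤ eˣ`, the kernel `θ/(1+θv)²` is at least `θ e^{-2θv}`, and against that
kernel the integral is elementary: with `c = γ/b` it equals `θ (e^{cu} - e^{-2θu})/(c + 2θ)`,
which is at least `θ (e^{cu} - 1)/(c + 2θ)`. The prefactor of `G_S'` is negative, so this lower
bound on the integral is an upper bound on `G_S'`, and `cθ/(c + 2θ) = 1/(θ⁻¹ + 2/c)`. -/

open Real intervalIntegral

lemma integral_exp_mul {k : ℝ} (hk : k ≠ 0) (a b : ℝ) :
    ∫ v in a..b, exp (k * v) = (exp (k * b) - exp (k * a)) / k := by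
  rw [integral_comp_mul_left exp hk, integral_exp, smul_eq_mul, inv_mul_eq_div]

lemma exp_neg_two_mul_le_one_div_one_add_sq {x : ℝ} (hx : -1 < x) :
    exp (-(2 * x)) ≤ 1 / (1 + x) ^ 2 := by
  have hx' : 0 < 1 + x := by linarith
  calc exp (-(2 * x)) = 1 / exp x ^ 2 := by rw [← exp_nat_mul, exp_neg, one_div]; norm_num
    _ ≤ 1 / (1 + x) ^ 2 := by gcongr; linarith [add_one_le_exp x]

lemma mul_exp_sub_one_div_le_integral {c θ u : ℝ} (hθ : 0 ≤ θ) (hk : 0 < c + 2 * θ)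
    (hu : 0 ≤ u) :
    θ * (exp (c * u) - 1) / (c + 2 * θ) ≤
      ∫ v in (0 : ℝ)..u, exp (c * (u - v)) * (θ / (1 + θ * v) ^ 2) := by
  set k := c + 2 * θ with hk_def
  have hexp : ∀ v, exp (c * u) * exp (-k * v) = exp (c * (u - v)) * exp (-(2 * (θ * v))) := by
    intro v
    rw [← exp_add, ← exp_add, hk_def]
    ring_nf
  have hpos : ∀ v ∈ Set.Icc 0 u, 0 < 1 + θ * v := fun v hv ↦ by
    have := hv.1; positivity
  calc θ * (exp (c * u) - 1) / k ≤ θ * (exp (c * u) - exp (c * u) * exp (-k * u)) / k := by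
        rw [hexp, sub_self, mul_zero, exp_zero, one_mul]
        gcongr
        exact exp_le_one_iff.2 (neg_nonpos.2 (by positivity))
    _ = θ * exp (c * u) * ((exp (-k * u) - exp (-k * 0)) / -k) := by
        rw [mul_zero, exp_zero]
        field_simp
        ring
    _ = ∫ v in (0 : ℝ)..u, θ * exp (c * u) * exp (-k * v) := by
        rw [integral_const_mul, integral_exp_mul (by linarith)]
    _ ≤ ∫ v in (0 : ℝ)..u, exp (c * (u - v)) * (θ / (1 + θ * v) ^ 2) := by
        refine integral_mono_on hu ((by fun_prop : Continuous _).intervalIntegrable _ _) ?_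
          fun v hv ↦ ?_
        · refine ContinuousOn.intervalIntegrable ?_
          rw [Set.uIcc_of_le hu]
          exact ContinuousOn.mul (by fun_prop)
            (continuousOn_const.div (by fun_prop) fun v hv ↦ (pow_pos (hpos v hv) 2).ne')
        · have hθv : -1 < θ * v := by linarith [hpos v hv]
          calc θ * exp (c * u) * exp (-k * v)
                = exp (c * (u - v)) * (θ * exp (-(2 * (θ * v)))) := by rw [mul_assoc, hexp]; ring
            _ ≤ exp (c * (u - v)) * (θ * (1 / (1 + θ * v) ^ 2)) := by
                gcongr; exact exp_neg_two_mul_le_one_div_one_add_sq hθv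
            _ = exp (c * (u - v)) * (θ / (1 + θ * v) ^ 2) := by rw [mul_one_div]

/-- For A-optimal design (`h(u) = 1 − 1/(1+u)`, so `h'(u) = 1/(1+u)²`), an upper bound
on the smoothed budget derivative `G_S'`. -/
theorem GS_A_optimal_bound (γ b θ : ℝ) (hγ : 1 ≤ γ) (hb : 0 < b) (hθ : 0 < θ)
    (GS' : ℝ → ℝ)
    (hGS' : ∀ u : ℝ, GS' u =
      -(γ / (b * (Real.exp 1 - 1))) *
        ∫ v in (0 : ℝ)..u, Real.exp ((γ / b) * (u - v)) * (θ / (1 + θ * v) ^ 2)) :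
    ∀ u : ℝ, 0 ≤ u →
      GS' u ≤ (1 / (Real.exp 1 - 1)) * (1 - Real.exp ((γ / b) * u)) / (θ⁻¹ + 2 * b / γ) := by
  intro u hu
  have hγ₀ : 0 < γ := by linarith
  have he : 0 < exp 1 - 1 := by linarith [add_one_lt_exp one_ne_zero]
  have hI := mul_exp_sub_one_div_le_integral (c := γ / b) hθ.le (by positivity) hu
  calc GS' u
        ≤ -(γ / (b * (exp 1 - 1))) * (θ * (exp (γ / b * u) - 1) / (γ / b + 2 * θ)) := by
        rw [hGS' u]
        exact mul_le_mul_of_nonpos_left hI (neg_nonpos.2 (by positivity))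
    _ = (1 / (exp 1 - 1)) * (1 - exp (γ / b * u)) / (θ⁻¹ + 2 * b / γ) := by
        field_simp
        ring
end

section
/- The map X ↦ (I+X)⁻² on positive semidefinite matrices is NOT order-reversing in general: there exist 2×2 PSD matrices U ⪰ U' ⪰ 0 such that (I+U)⁻² ⪯̸ (I+U')⁻². Equivalently, the gradient of the A-optimal objective H(X) = −tr((I+X)⁻¹) fails the PSD diminishing returns property. -/
/-!
Take `U' = diag(8, 0)` and the rank-one PSD increment `U = U' + 9 vvᵀ` with `v = (1, 1)`.
The `(0, 0)` entry of `(I + X)⁻²` is `1/81` at `X = U'` but `181/99²` at `X = U`, which is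
larger, so `(I + U')⁻² - (I + U)⁻²` has a negative diagonal entry.
-/

open Matrix

theorem Matrix.inv_sq_apply_zero_zero_fin_two {K : Type*} [Field K]
    (M : Matrix (Fin 2) (Fin 2) K) :
    (M⁻¹ ^ 2) 0 0 = (M 1 1 ^ 2 + M 0 1 * M 1 0) / M.det ^ 2 := by
  rw [inv_def, adjugate_fin_two, Ring.inverse_eq_inv']
  simp only [sq, mul_apply, Fin.sum_univ_two, smul_apply, of_apply, cons_val', cons_val_zero,
    cons_val_one, empty_val', cons_val_fin_one, smul_eq_mul]
  ring

open Matrix in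
/-- The map `X ↦ (I+X)⁻²` is NOT order-reversing on PSD matrices: there are `2×2` PSD
matrices `U ⪰ U' ⪰ 0` with `(I+U)⁻² ⪯̸ (I+U')⁻²`; i.e., the gradient of the A-optimal
objective fails the PSD diminishing returns property. -/
theorem inv_sq_not_antitone :
    ∃ U U' : Matrix (Fin 2) (Fin 2) ℝ, U'.PosSemidef ∧ (U - U').PosSemidef ∧
      ¬ (((1 + U')⁻¹) ^ 2 - ((1 + U)⁻¹) ^ 2).PosSemidef := by
  let U' : Matrix (Fin 2) (Fin 2) ℝ := diagonal ![8, 0]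
  let v : Fin 2 → ℝ := ![1, 1]
  refine ⟨U' + (9 : ℝ) • vecMulVec v v, U', ?_, ?_, fun h => ?_⟩
  · simp [U', Fin.forall_fin_two]
  · simpa using (posSemidef_vecMulVec_self_star v).smul (by norm_num : (0 : ℝ) ≤ 9)
  · have h₀₀ := h.diag_nonneg (i := 0)
    rw [Matrix.sub_apply, inv_sq_apply_zero_zero_fin_two, inv_sq_apply_zero_zero_fin_two] at h₀₀
    norm_num [U', v, det_fin_two, vecMulVec_apply] at h₀₀
end

section
/- Let H_S and G_S be concave differentiable functions (H_S a trace function on symmetric matrices, G_S on ℝ) with H_S(0) = 0 and G_S(0) = 0. Let A₁,…,Aₘ be PSD matrices, c₁,…,cₘ > 0, and suppose x₁,…,xₘ ∈ [0,1] satisfy xₜ(cₜ G_S'(Σ_{s≤t} cₛxₛ) + ⟨Aₜ, ∇H_S(Σ_{s≤t} Aₛxₛ)⟩) ≥ 0 for every t. Then H_S(Σₜ Aₜxₜ) + G_S(Σₜ cₜxₜ) ≥ 0. -/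
/-!
For a prefix `s` of the steps let `Φ s = H_S(∑_{t ∈ s} xₜ Aₜ) + G_S(∑_{t ∈ s} cₜ xₜ)`, so that
`Φ ∅ = 0` and the claim is `0 ≤ Φ univ`. Passing from `{s < t}` to `{s ≤ t}`, the tangent-line
inequality for `G_S` at the new point, together with its matrix analogue for `H_S` (Klein's
inequality), shows that `Φ` increases by at least the nonnegative quantity of the hypothesis;
the increments telescope.

Klein's inequality reduces to the scalar one: if `U = u diag(λ) uᵀ` and `V = v diag(μ) vᵀ`, the
entrywise squares of the orthogonal matrix `uᵀ v` form a doubly stochastic matrix, and all traces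
involved are averages of scalar expressions in `λᵢ` and `μⱼ` with these weights.
-/

open Finset Matrix

theorem ConcaveOn.le_add_mul_sub_of_hasDerivAt {S : Set ℝ} {f : ℝ → ℝ} {a b f' : ℝ}
    (hf : ConcaveOn ℝ S f) (ha : a ∈ S) (hb : b ∈ S) (hd : HasDerivAt f f' a) :
    f b ≤ f a + f' * (b - a) := by
  rcases lt_trichotomy a b with hab | rfl | hba
  · have := hf.slope_le_of_hasDerivAt ha hb hab hd
    rw [slope_def_field, div_le_iff₀ (sub_pos.2 hab)] at this
    linarith
  · simp
  · have := hf.le_slope_of_hasDerivAt hb ha hba hd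
    rw [slope_def_field, le_div_iff₀ (sub_pos.2 hba)] at this
    linarith

theorem Fin.sum_Iic_sub_Iio {M : Type*} [AddCommGroup M] {m : ℕ} (Φ : Finset (Fin m) → M) :
    ∑ t, (Φ (Iic t) - Φ (Iio t)) = Φ univ - Φ ∅ := by
  set g : ℕ → M := fun k => Φ (univ.filter fun s : Fin m => (s : ℕ) < k)
  have hIic (t : Fin m) : Iic t = univ.filter fun s : Fin m => (s : ℕ) < t + 1 := by
    ext s; simp only [mem_Iic, mem_filter, mem_univ, true_and, Fin.le_def]; omega
  have hIio (t : Fin m) : Iio t = univ.filter fun s : Fin m => (s : ℕ) < t := by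
    ext s; simp only [mem_Iio, mem_filter, mem_univ, true_and, Fin.lt_def]
  calc ∑ t : Fin m, (Φ (Iic t) - Φ (Iio t)) = ∑ k ∈ range m, (g (k + 1) - g k) := by
        simp only [hIic, hIio]; exact Fin.sum_univ_eq_sum_range (fun k => g (k + 1) - g k) m
    _ = Φ univ - Φ ∅ := by
        have hm : univ.filter (fun s : Fin m => (s : ℕ) < m) = univ := by ext s; simp
        have h0 : univ.filter (fun s : Fin m => (s : ℕ) < 0) = ∅ := by ext s; simp
        rw [sum_range_sub]; simp only [g, hm, h0]

namespace Matrix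

variable {ι : Type*} [Fintype ι] [DecidableEq ι]

theorem hadamard_self_mem_doublyStochastic_of_mem_unitaryGroup {W : Matrix ι ι ℝ}
    (hW : W ∈ unitaryGroup ι ℝ) : W ⊙ W ∈ doublyStochastic ℝ ι := by
  have hrow (i : ι) := congr_fun₂ (mem_unitaryGroup_iff.1 hW) i i
  have hcol (j : ι) := congr_fun₂ (mem_unitaryGroup_iff'.1 hW) j j
  simp only [mul_apply, star_apply, star_trivial, one_apply_eq] at hrow hcol
  refine mem_doublyStochastic_iff_sum.2 ⟨fun i j => mul_self_nonneg _, fun i => ?_, fun j => ?_⟩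
  · simpa [hadamard] using hrow i
  · simpa [hadamard] using hcol j

theorem sum_le_sum_add_sum_mul_of_mem_doublyStochastic {f f' : ℝ → ℝ}
    (hf : ∀ a b, f b ≤ f a + f' a * (b - a)) {w : Matrix ι ι ℝ} (hw : w ∈ doublyStochastic ℝ ι)
    (p q : ι → ℝ) :
    ∑ j, f (q j) ≤ ∑ i, f (p i) + ∑ i, ∑ j, w i j * (f' (p i) * (q j - p i)) := by
  calc ∑ j, f (q j) = ∑ j, ∑ i, w i j * f (q j) := by
        simp only [← sum_mul, sum_col_of_mem_doublyStochastic hw, one_mul]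
    _ ≤ ∑ j, ∑ i, w i j * (f (p i) + f' (p i) * (q j - p i)) := by
        gcongr with j _ i _
        · exact nonneg_of_mem_doublyStochastic hw
        · exact hf _ _
    _ = ∑ i, f (p i) + ∑ i, ∑ j, w i j * (f' (p i) * (q j - p i)) := by
        rw [sum_comm]
        simp only [mul_add, sum_add_distrib, ← sum_mul, sum_row_of_mem_doublyStochastic hw,
          one_mul]

theorem trace_conj_diagonal_mul_conj_diagonal (u v : Matrix ι ι ℝ) (d e : ι → ℝ) :
    (v * diagonal e * star v * (u * diagonal d * star u)).trace =
      ∑ i, ∑ j, ((star u * v) ⊙ (star u * v)) i j * (d i * e j) := by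
  have hcycle : (v * diagonal e * star v * (u * diagonal d * star u)).trace =
      (diagonal d * (star u * v) * diagonal e * star (star u * v)).trace := by
    rw [← Matrix.mul_assoc, trace_mul_comm]
    simp only [star_mul, star_star, Matrix.mul_assoc]
    rw [trace_mul_comm (diagonal d)]
    simp only [Matrix.mul_assoc]
  rw [hcycle]
  generalize star u * v = W
  simp only [trace, diag, mul_apply (N := star W), mul_diagonal, diagonal_mul, star_apply,
    star_trivial, hadamard_apply]
  exact sum_congr rfl fun i _ => sum_congr rfl fun j _ => by ring

theorem IsHermitian.trace_cfc {𝕜 : Type*} [RCLike 𝕜] {A : Matrix ι ι 𝕜} (hA : A.IsHermitian)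
    (f : ℝ → ℝ) : (cfc f A).trace = ∑ i, (f (hA.eigenvalues i) : 𝕜) := by
  rw [hA.cfc_eq, IsHermitian.cfc, Unitary.conjStarAlgAut_apply, trace_mul_cycle,
    Unitary.coe_star_mul_self, Matrix.one_mul, trace_diagonal]
  rfl

theorem trace_cfc_le_trace_cfc_add_trace_sub_mul {f f' : ℝ → ℝ}
    (hf : ∀ a b, f b ≤ f a + f' a * (b - a)) {U V : Matrix ι ι ℝ} (hU : U.IsHermitian)
    (hV : V.IsHermitian) :
    (cfc f V).trace ≤ (cfc f U).trace + ((V - U) * cfc f' U).trace := by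
  set u : Matrix ι ι ℝ := (hU.eigenvectorUnitary : Matrix ι ι ℝ)
  set v : Matrix ι ι ℝ := (hV.eigenvectorUnitary : Matrix ι ι ℝ)
  set w := (star u * v) ⊙ (star u * v)
  have hw : w ∈ doublyStochastic ℝ ι :=
    hadamard_self_mem_doublyStochastic_of_mem_unitaryGroup
      (mul_mem (Unitary.star_mem hU.eigenvectorUnitary.2) hV.eigenvectorUnitary.2)
  have hVU : (V * cfc f' U).trace =
      ∑ i, ∑ j, w i j * (f' (hU.eigenvalues i) * hV.eigenvalues j) := by
    conv_lhs => rw [hV.spectral_theorem, hU.cfc_eq, IsHermitian.cfc]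
    exact trace_conj_diagonal_mul_conj_diagonal u v _ _
  have hUU : (U * cfc f' U).trace =
      ∑ i, ∑ j, w i j * (f' (hU.eigenvalues i) * hU.eigenvalues i) := by
    have hmul : U * cfc f' U = cfc (fun x => x * f' x) U := by
      rw [cfc_mul _ _ U (hg := (Set.toFinite _).continuousOn f'), cfc_id' ℝ U]
    rw [hmul, hU.trace_cfc]
    refine sum_congr rfl fun i _ => ?_
    rw [← sum_mul, sum_row_of_mem_doublyStochastic hw, one_mul, mul_comm]
    rfl
  have key := sum_le_sum_add_sum_mul_of_mem_doublyStochastic hf hw hU.eigenvalues hV.eigenvalues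
  simp only [mul_sub, sum_sub_distrib] at key
  rw [sub_mul, trace_sub, hVU, hUU, hU.trace_cfc, hV.trace_cfc]
  simp only [RCLike.ofReal_real_eq_id, id]
  linarith

theorem trace_cfc_add_le_trace_cfc_add_of_nonneg {f f' g : ℝ → ℝ}
    (hf : ∀ a b, f b ≤ f a + f' a * (b - a)) (hg : ConcaveOn ℝ Set.univ g)
    (hgd : Differentiable ℝ g) {V B : Matrix ι ι ℝ} {x c p : ℝ} (hV : V.IsHermitian)
    (hVB : (V + x • B).IsHermitian)
    (h : 0 ≤ x * (c * deriv g (p + c * x) + (B * cfc f' (V + x • B)).trace)) :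
    (cfc f V).trace + g p ≤ (cfc f (V + x • B)).trace + g (p + c * x) := by
  have hH := trace_cfc_le_trace_cfc_add_trace_sub_mul hf hVB hV
  have hG : g p ≤ g (p + c * x) + deriv g (p + c * x) * (p - (p + c * x)) :=
    hg.le_add_mul_sub_of_hasDerivAt (Set.mem_univ _) (Set.mem_univ _) (hgd _).hasDerivAt
  rw [sub_add_cancel_left, neg_mul, smul_mul_assoc, trace_neg, trace_smul, smul_eq_mul] at hH
  linarith

end Matrix

open Matrix in
theorem telescoping_nonneg_general {n m : ℕ} [DecidableEq (Fin n)]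
    (hS hS' : ℝ → ℝ) (hSconc : ConcaveOn ℝ Set.univ hS)
    (hSderiv : ∀ u : ℝ, HasDerivAt hS (hS' u) u) (hS0 : hS 0 = 0)
    (GS : ℝ → ℝ) (hGconc : ConcaveOn ℝ Set.univ GS)
    (hGdiff : Differentiable ℝ GS) (hG0 : GS 0 = 0)
    (A : Fin m → Matrix (Fin n) (Fin n) ℝ) (hA : ∀ t, (A t).PosSemidef)
    (c : Fin m → ℝ)
    (x : Fin m → ℝ)
    (hsum : ∀ t : Fin m, (∑ s ∈ Finset.Iic t, x s • A s).PosSemidef)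
    (hTot : (∑ t, x t • A t).PosSemidef)
    (hrule : ∀ t : Fin m,
      0 ≤ x t * (c t * deriv GS (∑ s ∈ Finset.Iic t, c s * x s) +
        (A t * ((hsum t).isHermitian.cfc hS')).trace)) :
    0 ≤ (∑ i, hS (hTot.isHermitian.eigenvalues i)) + GS (∑ t, c t * x t) := by
  have htang (a b : ℝ) : hS b ≤ hS a + hS' a * (b - a) :=
    hSconc.le_add_mul_sub_of_hasDerivAt (Set.mem_univ a) (Set.mem_univ b) (hSderiv a)
  have hherm (s : Finset (Fin m)) : (∑ t ∈ s, x t • A t).IsHermitian :=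
    isSelfAdjoint_sum s fun t _ => (hA t).isHermitian.smul (IsSelfAdjoint.all _)
  let Φ : Finset (Fin m) → ℝ := fun s =>
    (cfc hS (∑ t ∈ s, x t • A t)).trace + GS (∑ t ∈ s, c t * x t)
  have hstep (t : Fin m) : 0 ≤ Φ (Iic t) - Φ (Iio t) := by
    have hU := (hsum t).isHermitian
    have h := hrule t
    rw [← hU.cfc_eq] at h
    simp only [Φ, ← sum_Iio_add_eq_sum_Iic] at h hU ⊢
    linarith [trace_cfc_add_le_trace_cfc_add_of_nonneg htang hGconc hGdiff (hherm _) hU h]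
  calc 0 ≤ ∑ t, (Φ (Iic t) - Φ (Iio t)) := sum_nonneg fun t _ => hstep t
    _ = Φ univ - Φ ∅ := Fin.sum_Iic_sub_Iio Φ
    _ = _ := by simp [Φ, hS0, hG0, hTot.isHermitian.trace_cfc]

open Matrix in
/-- If each primal step satisfies `xₜ(cₜ G_S'(Σ_{s≤t} cₛxₛ) + ⟨Aₜ, ∇H_S(Σ_{s≤t} xₛ•Aₛ)⟩) ≥ 0`,
then the final objective value `H_S(Σₜ xₜ•Aₜ) + G_S(Σₜ cₜxₜ)` is nonnegative, where `H_S`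
is the trace function of the concave differentiable `h_S`, and `∇H_S` acts spectrally by
applying `h_S'` to the eigenvalues. -/
theorem telescoping_nonneg {n m : ℕ} [DecidableEq (Fin n)]
    (hS hS' : ℝ → ℝ) (hSconc : ConcaveOn ℝ Set.univ hS)
    (hSderiv : ∀ u : ℝ, HasDerivAt hS (hS' u) u) (hS0 : hS 0 = 0)
    (GS : ℝ → ℝ) (hGconc : ConcaveOn ℝ Set.univ GS)
    (hGdiff : Differentiable ℝ GS) (hG0 : GS 0 = 0)
    (A : Fin m → Matrix (Fin n) (Fin n) ℝ) (hA : ∀ t, (A t).PosSemidef)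
    (c : Fin m → ℝ) (hc : ∀ t, 0 < c t)
    (x : Fin m → ℝ) (hx : ∀ t, x t ∈ Set.Icc (0 : ℝ) 1)
    (hsum : ∀ t : Fin m, (∑ s ∈ Finset.Iic t, x s • A s).PosSemidef)
    (hTot : (∑ t, x t • A t).PosSemidef)
    (hrule : ∀ t : Fin m,
      0 ≤ x t * (c t * deriv GS (∑ s ∈ Finset.Iic t, c s * x s) +
        (A t * ((hsum t).isHermitian.cfc hS')).trace)) :
    0 ≤ (∑ i, hS (hTot.isHermitian.eigenvalues i)) + GS (∑ t, c t * x t) :=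
  telescoping_nonneg_general hS hS' hSconc hSderiv hS0 GS hGconc hGdiff hG0 A hA c x hsum hTot hrule
end
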